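/- arXiv:2005.06813 — 5 statements merged into one kernel-verified Lean document; each statement's English description precedes it below -/
import Mathlib

section
/- Let (P, d) be a metric space and let H_P denote the combinatorial horoball over P. For points (x, m) and (y, n) in H_P with x ≠ y, the graph distance satisfies d_{H_P}((x,m),(y,n)) = min over k ≥ max(m, n) of (2k − m − n + ⌈2^{−k} d(x,y)⌉). Moreover: (a) if max(m,n) ≥ log₂(d(x,y)) then d_{H_P}((x,m),(y,n)) = |m − n| + 1; (b) if max(m,n) < log₂(d(x,y)) then d_{H_P}((x,m),(y,n)) = 2⌊log₂ d(x,y)⌋ − (m + n) + f, where 0 ≤ f ≤ 2. -/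
open SimpleGraph

/-- The Groves–Manning combinatorial horoball over a graph `G`: vertex set `V × ℕ`,
horizontal edges between `(x, m)` and `(y, m)` whenever `dist x y ≤ 2 ^ m`, and
vertical edges between `(x, m)` and `(x, m + 1)`. -/
def Horoball {V : Type*} (G : SimpleGraph V) : SimpleGraph (V × ℕ) where
  Adj p q :=
    (p.2 = q.2 ∧ p.1 ≠ q.1 ∧ G.dist p.1 q.1 ≤ 2 ^ p.2) ∨
    (p.1 = q.1 ∧ (p.2 = q.2 + 1 ∨ q.2 = p.2 + 1))
  symm := by
    constructor
    rintro ⟨x, m⟩ ⟨y, n⟩ (⟨h1, h2, h3⟩ | ⟨h1, h2⟩)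
    · exact Or.inl ⟨h1.symm, h2.symm, by simp only at h1 h3 ⊢; rw [SimpleGraph.dist_comm, ← h1]; exact h3⟩
    · exact Or.inr ⟨h1.symm, h2.symm⟩
  loopless := by
    constructor
    rintro ⟨x, m⟩ (⟨_, h, _⟩ | ⟨_, h | h⟩)
    · exact h rfl
    · omega
    · omega

/-!
Since a horizontal edge at level `k` spans `G`-distance `2 ^ k`, the walk that climbs from
`(x, m)` to level `k ≥ max m n`, crosses there and descends to `(y, n)` has length
`2k - (m + n) + ⌈d(x, y) / 2 ^ k⌉`. Conversely, if a walk reaches at most level `T` and has `h`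
horizontal edges, then `d(x, y) ≤ h * 2 ^ T` and the walk has at least `(T - m) + (T - n) + h`
edges; so some geodesic has the climb–cross–descend shape.

With `L = ⌊log₂ d(x, y)⌋`, crossing at level `L` takes at most two horizontal edges, while
crossing at a level `k < L` takes at least `2 ^ (L - k) ≥ 2 (L - k)` of them, which costs more
than climbing to `L`. If instead `d(x, y) ≤ 2 ^ max m n`, one edge at level `max m n` suffices.
-/

open SimpleGraph

namespace Horoball

variable {V : Type*} {G : SimpleGraph V}

lemma ceil_div_two_pow_le_iff {D j k : ℕ} : ⌈(D : ℚ) / 2 ^ k⌉₊ ≤ j ↔ D ≤ j * 2 ^ k := by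
  rw [Nat.ceil_le, div_le_iff₀ (by positivity)]
  norm_cast

lemma two_pow_le_ceil_div_two_pow {D k t : ℕ} (h : 2 ^ (k + t) ≤ D) :
    2 ^ t ≤ ⌈(D : ℚ) / 2 ^ k⌉₊ := by
  have : (2 : ℚ) ^ t ≤ D / 2 ^ k := by
    rw [le_div_iff₀ (by positivity), ← pow_add, add_comm]
    exact_mod_cast h
  exact_mod_cast this.trans (Nat.le_ceil _)

lemma adj_vertical (x : V) (k : ℕ) : (Horoball G).Adj (x, k) (x, k + 1) :=
  Or.inr ⟨rfl, Or.inr rfl⟩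

lemma adj_horizontal {a b : V} {k : ℕ} (hab : a ≠ b) (h : G.dist a b ≤ 2 ^ k) :
    (Horoball G).Adj (a, k) (b, k) :=
  Or.inl ⟨rfl, hab, h⟩

lemma exists_walk_vertical (G : SimpleGraph V) (x : V) {m k : ℕ} (h : m ≤ k) :
    ∃ w : (Horoball G).Walk (x, m) (x, k), w.length = k - m := by
  induction k, h using Nat.le_induction with
  | base => exact ⟨.nil, by simp⟩
  | succ k hmk ih =>
    obtain ⟨w, hw⟩ := ih
    exact ⟨w.concat (adj_vertical x k), by rw [Walk.length_concat]; omega⟩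

lemma exists_walk_length_le_one_of_dist_le {a b : V} {k : ℕ} (h : G.dist a b ≤ 2 ^ k) :
    ∃ w : (Horoball G).Walk (a, k) (b, k), w.length ≤ 1 := by
  by_cases hab : a = b
  · subst hab
    exact ⟨.nil, by simp⟩
  · exact ⟨(adj_horizontal hab h).toWalk, by simp⟩

lemma exists_walk_horizontal (k : ℕ) : ∀ (j : ℕ) {a b : V} (p : G.Walk a b),
    p.length ≤ j * 2 ^ k → ∃ w : (Horoball G).Walk (a, k) (b, k), w.length ≤ j
  | 0, a, b, p, hp => by
    obtain rfl := p.eq_of_length_eq_zero (by omega)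
    exact ⟨.nil, by simp⟩
  | j + 1, a, b, p, hp => by
    obtain ⟨w₁, hw₁⟩ := exists_walk_length_le_one_of_dist_le (k := k)
      ((dist_le (p.take (2 ^ k))).trans (by simp))
    obtain ⟨w₂, hw₂⟩ := exists_walk_horizontal k j (p.drop (2 ^ k))
      (by rw [Walk.drop_length]; rw [add_mul] at hp; omega)
    exact ⟨w₁.append w₂, by rw [Walk.length_append]; omega⟩

lemma exists_walk_length_le (hG : G.Connected) (x y : V) {m n k : ℕ} (hk : max m n ≤ k) :
    ∃ w : (Horoball G).Walk (x, m) (y, n),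
      w.length ≤ 2 * k - (m + n) + ⌈(G.dist x y : ℚ) / 2 ^ k⌉₊ := by
  obtain ⟨p, hp⟩ := hG.exists_walk_length_eq_dist x y
  obtain ⟨up, hup⟩ := exists_walk_vertical G x (le_of_max_le_left hk)
  obtain ⟨across, hacross⟩ := exists_walk_horizontal k ⌈(G.dist x y : ℚ) / 2 ^ k⌉₊ p
    (hp ▸ ceil_div_two_pow_le_iff.1 le_rfl)
  obtain ⟨down, hdown⟩ := exists_walk_vertical G y (le_of_max_le_right hk)
  refine ⟨up.append (across.append down.reverse), ?_⟩
  simp only [Walk.length_append, Walk.length_reverse]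
  omega

/-- `T` bounds the levels visited by the walk and `h` counts its horizontal edges. -/
lemma exists_level_of_walk (hG : G.Connected) {p q : V × ℕ} (w : (Horoball G).Walk p q) :
    ∃ T h : ℕ, p.2 ≤ T ∧ q.2 ≤ T ∧ G.dist p.1 q.1 ≤ h * 2 ^ T ∧
      (T - p.2) + (T - q.2) + h ≤ w.length := by
  induction w with
  | nil => exact ⟨_, 0, le_rfl, le_rfl, by simp, by simp⟩
  | @cons a r c hadj w ih =>
    obtain ⟨T, h, hrT, hcT, hdist, hlen⟩ := ih
    rw [Walk.length_cons]
    rcases hadj with ⟨hlevel, -, hstep⟩ | ⟨hx, hlevel⟩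
    · refine ⟨T, h + 1, by omega, hcT, ?_, by omega⟩
      calc G.dist a.1 c.1 ≤ G.dist a.1 r.1 + G.dist r.1 c.1 := hG.dist_triangle
        _ ≤ 2 ^ T + h * 2 ^ T :=
          add_le_add (hstep.trans (Nat.pow_le_pow_right two_pos (by omega))) hdist
        _ = (h + 1) * 2 ^ T := by ring
    · refine ⟨max a.2 T, h, le_max_left _ _, hcT.trans (le_max_right _ _), ?_, by omega⟩
      rw [hx]
      exact hdist.trans (Nat.mul_le_mul_left h (Nat.pow_le_pow_right two_pos (le_max_right ..)))

theorem isLeast_dist (hG : G.Connected) (x y : V) (m n : ℕ) :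
    IsLeast {v : ℕ | ∃ k : ℕ, max m n ≤ k ∧
      v = 2 * k - (m + n) + ⌈((G.dist x y : ℚ) / 2 ^ k)⌉₊}
      ((Horoball G).dist (x, m) (y, n)) := by
  refine ⟨?_, fun v ⟨k, hk, hv⟩ => ?_⟩
  · obtain ⟨w₀, -⟩ := exists_walk_length_le hG x y (le_refl (max m n))
    obtain ⟨w, hw⟩ := (Walk.reachable w₀).exists_walk_length_eq_dist
    obtain ⟨T, h, hmT, hnT, hdist, hlen⟩ := exists_level_of_walk hG w
    dsimp only at hmT hnT hdist
    obtain ⟨w', hw'⟩ := exists_walk_length_le hG x y (max_le hmT hnT)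
    have hceil := ceil_div_two_pow_le_iff.2 hdist
    have hdist_le := dist_le w'
    exact ⟨T, max_le hmT hnT, by omega⟩
  · obtain ⟨w, hw⟩ := exists_walk_length_le hG x y hk
    exact hv ▸ (dist_le w).trans hw

theorem dist_eq_of_dist_le (hG : G.Connected) {x y : V} (hxy : x ≠ y) {m n : ℕ}
    (h : G.dist x y ≤ 2 ^ max m n) :
    (Horoball G).dist (x, m) (y, n) = 2 * max m n - (m + n) + 1 := by
  obtain ⟨⟨k, hk, hdist⟩, hleast⟩ := isLeast_dist hG x y m n
  have hpos : 0 < ⌈(G.dist x y : ℚ) / 2 ^ k⌉₊ :=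
    Nat.ceil_pos.2 (div_pos (by exact_mod_cast hG.pos_dist_of_ne hxy) (by positivity))
  have hone : ⌈(G.dist x y : ℚ) / 2 ^ max m n⌉₊ ≤ 1 :=
    ceil_div_two_pow_le_iff.2 (by rwa [one_mul])
  have hle := hleast ⟨max m n, le_rfl, rfl⟩
  omega

theorem dist_bounds_of_lt (hG : G.Connected) {x y : V} {m n : ℕ}
    (h : 2 ^ max m n < G.dist x y) :
    2 * Nat.log 2 (G.dist x y) - (m + n) ≤ (Horoball G).dist (x, m) (y, n) ∧
      (Horoball G).dist (x, m) (y, n) ≤ 2 * Nat.log 2 (G.dist x y) - (m + n) + 2 := by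
  set L := Nat.log 2 (G.dist x y)
  have hL : 2 ^ L ≤ G.dist x y := Nat.pow_log_le_self 2 (Nat.zero_lt_of_lt h).ne'
  have hmax : max m n ≤ L := Nat.le_log_of_pow_le one_lt_two h.le
  obtain ⟨⟨k, hk, hdist⟩, hleast⟩ := isLeast_dist hG x y m n
  refine ⟨?_, ?_⟩
  · rw [hdist]
    rcases le_or_gt L k with hLk | hkL
    · omega
    obtain ⟨s, hs⟩ : ∃ s, L = k + (s + 1) := ⟨L - k - 1, by omega⟩
    have hceil := two_pow_le_ceil_div_two_pow (hs ▸ hL)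
    have hs_lt := s.lt_two_pow_self
    rw [pow_succ] at hceil
    omega
  · have htwo : ⌈(G.dist x y : ℚ) / 2 ^ L⌉₊ ≤ 2 := ceil_div_two_pow_le_iff.2 <| by
      rw [← pow_succ']
      exact (Nat.lt_pow_succ_log_self one_lt_two _).le
    have hle := hleast ⟨L, hmax, rfl⟩
    omega

end Horoball

lemma Real.logb_two_natCast_le_natCast_iff {D k : ℕ} (hD : 0 < D) :
    Real.logb 2 D ≤ k ↔ D ≤ 2 ^ k := by
  rw [Real.logb_le_iff_le_rpow one_lt_two (by exact_mod_cast hD), Real.rpow_natCast]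
  norm_cast

/-- Distance formula in the combinatorial horoball (Fact on horoball distances):
the exact minimization formula, together with the two regimes (a) and (b). -/
theorem horoball_dist_formula {V : Type*} (G : SimpleGraph V) (hG : G.Connected)
    (x y : V) (hxy : x ≠ y) (m n : ℕ) :
    ((Horoball G).dist (x, m) (y, n) =
      sInf {v : ℕ | ∃ k : ℕ, max m n ≤ k ∧
        v = 2 * k - (m + n) + ⌈((G.dist x y : ℚ) / 2 ^ k)⌉₊}) ∧
    ((Real.logb 2 (G.dist x y) ≤ (max m n : ℝ)) →
      (((Horoball G).dist (x, m) (y, n) : ℤ) = |(m : ℤ) - (n : ℤ)| + 1)) ∧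
    (((max m n : ℝ) < Real.logb 2 (G.dist x y)) →
      ∃ f : ℤ, 0 ≤ f ∧ f ≤ 2 ∧
        (((Horoball G).dist (x, m) (y, n) : ℤ) =
          2 * (Nat.log 2 (G.dist x y) : ℤ) - ((m : ℤ) + (n : ℤ)) + f)) := by
  have hlog := Real.logb_two_natCast_le_natCast_iff (k := max m n) (hG.pos_dist_of_ne hxy)
  rw [Nat.cast_max] at hlog
  refine ⟨(Horoball.isLeast_dist hG x y m n).csInf_eq.symm, fun hle => ?_, fun hlt => ?_⟩
  · rw [Horoball.dist_eq_of_dist_le hG hxy (hlog.1 hle), abs_eq_max_neg]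
    push_cast
    omega
  · have hmax : 2 ^ max m n < G.dist x y := not_le.1 (mt hlog.2 (not_le.2 hlt))
    obtain ⟨hlower, hupper⟩ := Horoball.dist_bounds_of_lt hG hmax
    have hmax_le := Nat.le_log_of_pow_le one_lt_two hmax.le
    exact ⟨_, by omega, by omega, (add_sub_cancel _ _).symm⟩
end

section
/- Let G be a group and ℙ = {P₁, …, P_k} a finite almost malnormal collection of subgroups, i.e. whenever P_i ∩ g P_j g⁻¹ is infinite for some g ∈ G, one has i = j and g ∈ P_i. Let H ≤ G be a subgroup of finite index. For each P ∈ ℙ choose a set T_P of representatives of the double cosets H\G/P containing 1, and set ℚ = { aPa⁻¹ ∩ H : P ∈ ℙ, a ∈ T_P }. Then ℚ is an almost malnormal collection of subgroups of H, and moreover for every g ∈ G and P ∈ ℙ there exist h ∈ H and Q ∈ ℚ with Stab_H(gP) = gPg⁻¹ ∩ H = hQh⁻¹. -/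
/-!
Dropping `H`, an infinite intersection `(h a) Pᵢ (h a)⁻¹ ∩ b Pⱼ b⁻¹` becomes, after conjugation
by `(h a)⁻¹`, an infinite intersection `Pᵢ ∩ c Pⱼ c⁻¹`; almost malnormality of `ℙ` then gives
`i = j` and `b ∈ h a Pᵢ`, so `a` and `b` represent the same double coset `H b Pᵢ`, whence
`a = b` and `h ∈ a Pᵢ a⁻¹`. For the stabilizers, writing `g = h a p` with `h ∈ H`, `p ∈ Pᵢ`
gives `g Pᵢ g⁻¹ ∩ H = h (a Pᵢ a⁻¹ ∩ H) h⁻¹`.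
-/

/-- The conjugate subgroup `g P g⁻¹`. -/
def conjSub {G : Type*} [Group G] (g : G) (P : Subgroup G) : Subgroup G :=
  P.map (MulAut.conj g).toMonoidHom

section ConjSub

variable {G : Type*} [Group G]

lemma mem_conjSub {g x : G} {P : Subgroup G} : x ∈ conjSub g P ↔ g⁻¹ * x * g ∈ P := by
  rw [conjSub, Subgroup.mem_map_equiv]
  simp

lemma conjSub_conjSub (g g' : G) (P : Subgroup G) :
    conjSub g (conjSub g' P) = conjSub (g * g') P := by
  ext x
  simp only [mem_conjSub, mul_inv_rev]
  group

lemma conjSub_inf (g : G) (A B : Subgroup G) :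
    conjSub g (A ⊓ B) = conjSub g A ⊓ conjSub g B :=
  Subgroup.map_inf _ _ _ (MulAut.conj g).injective

lemma conjSub_mono (g : G) {A B : Subgroup G} (h : A ≤ B) : conjSub g A ≤ conjSub g B :=
  Subgroup.map_mono h

lemma conjSub_eq_self {g : G} {P : Subgroup G} (hg : g ∈ P) : conjSub g P = P := by
  ext x
  rw [mem_conjSub]
  constructor
  · intro hx
    simpa [mul_assoc] using P.mul_mem (P.mul_mem hg hx) (P.inv_mem hg)
  · intro hx
    exact P.mul_mem (P.mul_mem (P.inv_mem hg) hx) hg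

lemma infinite_conjSub_iff {g : G} {K : Subgroup G} :
    ((conjSub g K : Subgroup G) : Set G).Infinite ↔ (K : Set G).Infinite := by
  rw [conjSub, Subgroup.coe_map]
  exact Set.infinite_image_iff (MulAut.conj g).injective.injOn

lemma conjSub_mul_mul_inf {H P : Subgroup G} {h p : G} (a : G) (hh : h ∈ H) (hp : p ∈ P) :
    conjSub (h * a * p) P ⊓ H = conjSub h (conjSub a P ⊓ H) := by
  rw [conjSub_inf, conjSub_conjSub, conjSub_eq_self hh, ← conjSub_conjSub (h * a),
    conjSub_eq_self hp]

end ConjSub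

lemma eq_and_mem_of_infinite_conjSub_inf_conjSub {G ι : Type*} [Group G] {P : ι → Subgroup G}
    (hmal : ∀ (i j : ι) (g : G),
      ((P i ⊓ conjSub g (P j) : Subgroup G) : Set G).Infinite → i = j ∧ g ∈ P i)
    {i j : ι} {x y : G}
    (hinf : ((conjSub x (P i) ⊓ conjSub y (P j) : Subgroup G) : Set G).Infinite) :
    i = j ∧ x⁻¹ * y ∈ P i := by
  have hconj : conjSub x (P i) ⊓ conjSub y (P j) = conjSub x (P i ⊓ conjSub (x⁻¹ * y) (P j)) := by
    rw [conjSub_inf, conjSub_conjSub, mul_inv_cancel_left]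
  rw [hconj, infinite_conjSub_iff] at hinf
  exact hmal i j _ hinf

lemma eq_of_doubleCoset_rep {G : Type*} [Group G] {H P : Subgroup G} {T : Set G}
    (hT : ∀ g : G, ∃! a : G, a ∈ T ∧ ∃ h ∈ H, ∃ p ∈ P, g = h * a * p)
    {a b h p : G} (ha : a ∈ T) (hb : b ∈ T) (hh : h ∈ H) (hp : p ∈ P) (hab : b = h * a * p) :
    a = b :=
  (hT b).unique ⟨ha, h, hh, p, hp, hab⟩ ⟨hb, 1, H.one_mem, 1, P.one_mem, by simp⟩

theorem induced_paring_general {G : Type*} [Group G] (k : ℕ) (P : Fin k → Subgroup G)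
    (hmal : ∀ (i j : Fin k) (g : G),
      ((P i ⊓ conjSub g (P j) : Subgroup G) : Set G).Infinite → i = j ∧ g ∈ P i)
    (H : Subgroup G)
    (T : Fin k → Set G)
    (hTrep : ∀ (i : Fin k) (g : G),
      ∃! a : G, a ∈ T i ∧ ∃ h ∈ H, ∃ p ∈ P i, g = h * a * p) :
    (∀ (i j : Fin k) (a b : G), a ∈ T i → b ∈ T j → ∀ h ∈ H,
      ((conjSub h (conjSub a (P i) ⊓ H) ⊓ (conjSub b (P j) ⊓ H) : Subgroup G) :
          Set G).Infinite →
        i = j ∧ a = b ∧ h ∈ conjSub a (P i) ⊓ H) ∧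
    (∀ (g : G) (i : Fin k), ∃ h ∈ H, ∃ a ∈ T i,
      conjSub g (P i) ⊓ H = conjSub h (conjSub a (P i) ⊓ H)) := by
  refine ⟨fun i j a b ha hb h hh hinf => ?_, fun g i => ?_⟩
  · have hle : conjSub h (conjSub a (P i) ⊓ H) ⊓ (conjSub b (P j) ⊓ H) ≤
        conjSub (h * a) (P i) ⊓ conjSub b (P j) :=
      inf_le_inf (conjSub_conjSub h a (P i) ▸ conjSub_mono h inf_le_left) inf_le_left
    obtain ⟨rfl, hp⟩ := eq_and_mem_of_infinite_conjSub_inf_conjSub hmal (hinf.mono hle)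
    obtain rfl : a = b := eq_of_doubleCoset_rep (hTrep i) ha hb hh hp (by group)
    refine ⟨rfl, rfl, Subgroup.mem_inf.2 ⟨mem_conjSub.2 ?_, hh⟩⟩
    simpa [mul_assoc] using (P i).inv_mem hp
  · obtain ⟨a, ⟨ha, h, hh, p, hp, rfl⟩, -⟩ := hTrep i g
    exact ⟨h, hh, a, ha, conjSub_mul_mul_inf a hh hp⟩

/-- Induced paring of a finite-index subgroup: if `ℙ = {P₁, …, P_k}` is an almost
malnormal collection of subgroups of `G`, `H ≤ G` has finite index, and `T i` is a set
of representatives of the double cosets `H\G/Pᵢ` containing `1`, then the collection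
`ℚ = {a Pᵢ a⁻¹ ∩ H : a ∈ T i}` is almost malnormal in `H`, and every stabilizer
`Stab_H(gPᵢ) = g Pᵢ g⁻¹ ∩ H` is an `H`-conjugate of a member of `ℚ`. -/
theorem induced_paring {G : Type*} [Group G] (k : ℕ) (P : Fin k → Subgroup G)
    (hmal : ∀ (i j : Fin k) (g : G),
      ((P i ⊓ conjSub g (P j) : Subgroup G) : Set G).Infinite → i = j ∧ g ∈ P i)
    (H : Subgroup G) (hH : H.FiniteIndex)
    (T : Fin k → Set G) (hT1 : ∀ i, (1 : G) ∈ T i)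
    (hTrep : ∀ (i : Fin k) (g : G),
      ∃! a : G, a ∈ T i ∧ ∃ h ∈ H, ∃ p ∈ P i, g = h * a * p) :
    (∀ (i j : Fin k) (a b : G), a ∈ T i → b ∈ T j → ∀ h ∈ H,
      ((conjSub h (conjSub a (P i) ⊓ H) ⊓ (conjSub b (P j) ⊓ H) : Subgroup G) :
          Set G).Infinite →
        i = j ∧ a = b ∧ h ∈ conjSub a (P i) ⊓ H) ∧
    (∀ (g : G) (i : Fin k), ∃ h ∈ H, ∃ a ∈ T i,
      conjSub g (P i) ⊓ H = conjSub h (conjSub a (P i) ⊓ H)) :=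
  induced_paring_general k P hmal H T hTrep
end

section
/- Let A' ≤ A ≤ G be groups with A' of finite index in A and A' separable in G. Then there exist subgroups A'' and H of G such that: (1) H is a normal subgroup of finite index in G; (2) A'' = H ∩ A' is a normal subgroup of finite index in A; (3) for all g ∈ G, (gAg⁻¹) ∩ H = gA''g⁻¹. -/
/-- A subgroup `K ≤ G` is separable if for every `g ∉ K` there is a finite-index
subgroup of `G` containing `K` but not `g`. -/
def IsSeparable' {G : Type*} [Group G] (K : Subgroup G) : Prop :=
  ∀ g : G, g ∉ K → ∃ G' : Subgroup G, G'.FiniteIndex ∧ K ≤ G' ∧ g ∉ G'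

/-!
Separate the representative of each of the finitely many cosets of `A'` in `A` that lies outside
`A'` from `A'` by a finite-index subgroup. Membership in `A'` and in each of these subgroups is
constant on cosets of `A'`, so their intersection, and hence its normal core `H`, meets `A` only
inside `A'`. Then `H ⊓ A' = H ⊓ A` is normal of finite index in `A`, and conjugation by `g`
fixes `H`.
-/
theorem IsSeparable'.exists_finiteIndex_separating {G : Type*} [Group G] {K : Subgroup G}
    (hsep : IsSeparable' K) (g : G) :
    ∃ G' : Subgroup G, G'.FiniteIndex ∧ K ≤ G' ∧ (g ∈ G' → g ∈ K) := by
  by_cases hg : g ∈ K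
  · exact ⟨⊤, inferInstance, le_top, fun _ ↦ hg⟩
  · obtain ⟨G', hG', hKG', hgG'⟩ := hsep g hg
    exact ⟨G', hG', hKG', fun hg' ↦ absurd hg' hgG'⟩

theorem IsSeparable'.exists_finiteIndex_inf_le {G : Type*} [Group G] {A A' : Subgroup G}
    [(A'.subgroupOf A).FiniteIndex] (hsep : IsSeparable' A') :
    ∃ K : Subgroup G, K.FiniteIndex ∧ K ⊓ A ≤ A' := by
  have : Finite (A ⧸ A'.subgroupOf A) := Subgroup.finite_quotient_of_finiteIndex
  choose f hf_fi hf_le hf_mem using fun q : A ⧸ A'.subgroupOf A ↦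
    hsep.exists_finiteIndex_separating (q.out : G)
  refine ⟨⨅ q, f q, Subgroup.finiteIndex_iInf hf_fi, ?_⟩
  rintro x ⟨hxK, hxA⟩
  set q : A ⧸ A'.subgroupOf A := QuotientGroup.mk ⟨x, hxA⟩
  obtain ⟨⟨h, hh⟩, hout⟩ := QuotientGroup.mk_out_eq_mul (A'.subgroupOf A) ⟨x, hxA⟩
  have hh' : (h : G) ∈ A' := hh
  have hout' : (q.out : G) = x * h := congrArg Subtype.val hout
  have hxf : x ∈ f q := Subgroup.mem_iInf.mp hxK q
  have hout_mem : (q.out : G) ∈ A' := by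
    refine hf_mem q ?_
    rw [hout']
    exact mul_mem hxf (hf_le q hh')
  rwa [hout', Subgroup.mul_mem_cancel_right A' hh'] at hout_mem

theorem IsSeparable'.exists_normal_finiteIndex_inf_le {G : Type*} [Group G] {A A' : Subgroup G}
    [(A'.subgroupOf A).FiniteIndex] (hsep : IsSeparable' A') :
    ∃ H : Subgroup G, H.Normal ∧ H.FiniteIndex ∧ H ⊓ A ≤ A' := by
  obtain ⟨K, hK, hKA⟩ := hsep.exists_finiteIndex_inf_le (A := A)
  exact ⟨K.normalCore, inferInstance, inferInstance,
    le_trans (inf_le_inf_right A K.normalCore_le) hKA⟩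

theorem conjSub_inf_of_normal {G : Type*} [Group G] (g : G) (H K : Subgroup G) [H.Normal] :
    conjSub g (H ⊓ K) = conjSub g K ⊓ H := by
  rw [conjSub, Subgroup.map_inf_eq _ _ _ (MulAut.conj g).injective, inf_comm]
  exact congrArg (conjSub g K ⊓ ·) (Subgroup.Normal.map_conj_eq H g)

/-- If `A' ≤ A ≤ G`, `A'` has finite index in `A` and `A'` is separable in `G`, then
there are subgroups `A''` and `H` with: `H` normal of finite index in `G`;
`A'' = H ∩ A'` normal of finite index in `A`; and `(gAg⁻¹) ∩ H = gA''g⁻¹` for all `g`. -/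
theorem separable_finite_index_subgroup {G : Type*} [Group G]
    (A A' : Subgroup G) (hle : A' ≤ A)
    (hfi : (A'.subgroupOf A).FiniteIndex) (hsep : IsSeparable' A') :
    ∃ A'' H : Subgroup G,
      (H.Normal ∧ H.FiniteIndex) ∧
      (A'' = H ⊓ A' ∧ (A''.subgroupOf A).Normal ∧ (A''.subgroupOf A).FiniteIndex) ∧
      (∀ g : G, conjSub g A ⊓ H = conjSub g A'') := by
  obtain ⟨H, hH, hHfi, hHA⟩ := hsep.exists_normal_finiteIndex_inf_le (A := A)
  have hHA' : H ⊓ A' = H ⊓ A := le_antisymm (inf_le_inf_left H hle) (le_inf inf_le_left hHA)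
  have hsub : (H ⊓ A').subgroupOf A = H.subgroupOf A := by
    rw [hHA', Subgroup.inf_subgroupOf_right]
  refine ⟨H ⊓ A', H, ⟨hH, hHfi⟩, ⟨rfl, ?_⟩, fun g ↦ ?_⟩
  · rw [hsub]
    exact ⟨Subgroup.normal_subgroupOf, inferInstance⟩
  · rw [hHA', conjSub_inf_of_normal]
end

section
/- Let G be a group, ℙ = {P₁, …, P_n} a finite collection of subgroups, and for each j let P_j^c ⊴ P_j be a normal finite-index subgroup. Let N = ⟪P_j^c : 1 ≤ j ≤ n⟫ be the normal closure in G of the union of the P_j^c, and let π : G → G/N be the quotient map. Assume that G/N is residually finite and that π restricted to P_j has kernel exactly P_j^c (i.e. P_j/P_j^c embeds in G/N) for each j. Then there exists a normal finite-index subgroup K ⊴ G such that for every g ∈ G and every j, K ∩ g P_j g⁻¹ = g P_j^c g⁻¹. -/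
/-- A group is residually finite if every nontrivial element survives in some finite
quotient. -/
def ResiduallyFinite (Q : Type*) [Group Q] : Prop :=
  ∀ q : Q, q ≠ 1 → ∃ (F : Type) (_ : Group F) (_ : Finite F) (φ : Q →* F), φ q ≠ 1

theorem Group.exists_finiteIndexNormalSubgroup_forall_mem_eq_one {G : Type*} [Group G]
    [Group.ResiduallyFinite G] {S : Set G} (hS : S.Finite) :
    ∃ H : FiniteIndexNormalSubgroup G, ∀ g ∈ S, g ∈ H → g = 1 := by
  induction S, hS using Set.Finite.induction_on with
  | empty => exact ⟨.ofSubgroup ⊤, by simp⟩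
  | @insert a S _ _ ih =>
    obtain ⟨H, hH⟩ := ih
    by_cases ha : a = 1
    · exact ⟨H, by rintro g (rfl | hg) hgH; exacts [ha, hH g hg hgH]⟩
    obtain ⟨H', haH'⟩ := exists_finiteIndexNormalSubgroup_notMem a ha
    refine ⟨H ⊓ H', ?_⟩
    rintro g (rfl | hg) hgH
    exacts [absurd hgH.2 haH', hH g hg hgH.1]

theorem Subgroup.finite_map_of_relIndex_ker_ne_zero {G Q : Type*} [Group G] [Group Q]
    (f : G →* Q) {H : Subgroup G} (hH : f.ker.relIndex H ≠ 0) : Finite (H.map f) :=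
  Nat.finite_of_card_ne_zero (relIndex_ker H f ▸ hH)

theorem Subgroup.comap_inf_eq_ker_inf {G Q : Type*} [Group G] [Group Q] (f : G →* Q)
    {L : Subgroup Q} {H : Subgroup G} (hL : ∀ q ∈ H.map f, q ∈ L → q = 1) :
    L.comap f ⊓ H = f.ker ⊓ H := by
  refine le_antisymm (fun x ⟨hxL, hxH⟩ => ⟨hL (f x) ⟨x, hxH, rfl⟩ hxL, hxH⟩) ?_
  exact inf_le_inf_right H fun x hx => by simp [(MonoidHom.mem_ker).1 hx]

theorem Subgroup.Normal.inf_conjSub_eq {G : Type*} [Group G] {K P Pc : Subgroup G}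
    (hK : K.Normal) (h : K ⊓ P = Pc) (g : G) : K ⊓ conjSub g P = conjSub g Pc := by
  rw [← h, conjSub, conjSub, Subgroup.map_inf _ _ _ (MulAut.conj g).injective]
  congr 1
  exact (Subgroup.Normal.map_conj_eq (H := K) g).symm

theorem dehn_filling_finite_index_general {G : Type*} [Group G] (n : ℕ)
    (P Pc : Fin n → Subgroup G)
    (hfi : ∀ j, ((Pc j).subgroupOf (P j)).FiniteIndex)
    (hres : ResiduallyFinite
      (G ⧸ Subgroup.normalClosure (⋃ j, ((Pc j : Set G)))))
    (hker : ∀ j, Subgroup.normalClosure (⋃ j, ((Pc j : Set G))) ⊓ P j = Pc j) :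
    ∃ K : Subgroup G, K.Normal ∧ K.FiniteIndex ∧
      ∀ (g : G) (j : Fin n), K ⊓ conjSub g (P j) = conjSub g (Pc j) := by
  set N := Subgroup.normalClosure (⋃ j, ((Pc j : Set G)))
  let π := QuotientGroup.mk' N
  have : Group.ResiduallyFinite (G ⧸ N) :=
    Group.residuallyFinite_of_forall_exists_finite_monoidHom hres
  have hfinite (j : Fin n) : Finite ((P j).map π) := by
    refine Subgroup.finite_map_of_relIndex_ker_ne_zero π ?_
    rw [QuotientGroup.ker_mk', ← Subgroup.inf_relIndex_right, hker j]
    exact (hfi j).index_ne_zero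
  obtain ⟨H, hH⟩ := Group.exists_finiteIndexNormalSubgroup_forall_mem_eq_one
    (Set.finite_iUnion fun j => Set.toFinite ((P j).map π : Set (G ⧸ N)))
  refine ⟨(H.comap π).toSubgroup, inferInstance, inferInstance, fun g j => ?_⟩
  refine Subgroup.Normal.inf_conjSub_eq inferInstance ?_ g
  rw [FiniteIndexNormalSubgroup.toSubgroup_comap,
    Subgroup.comap_inf_eq_ker_inf π fun q hq => hH q (Set.mem_iUnion_of_mem j hq),
    QuotientGroup.ker_mk', hker j]

/-- Deep residually finite Dehn fillings give finite-index subgroups with prescribed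
intersections with all conjugates of the peripheral subgroups. -/
theorem dehn_filling_finite_index {G : Type*} [Group G] (n : ℕ)
    (P Pc : Fin n → Subgroup G)
    (hle : ∀ j, Pc j ≤ P j)
    (hnormal : ∀ j, ((Pc j).subgroupOf (P j)).Normal)
    (hfi : ∀ j, ((Pc j).subgroupOf (P j)).FiniteIndex)
    (hres : ResiduallyFinite
      (G ⧸ Subgroup.normalClosure (⋃ j, ((Pc j : Set G)))))
    (hker : ∀ j, Subgroup.normalClosure (⋃ j, ((Pc j : Set G))) ⊓ P j = Pc j) :
    ∃ K : Subgroup G, K.Normal ∧ K.FiniteIndex ∧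
      ∀ (g : G) (j : Fin n), K ⊓ conjSub g (P j) = conjSub g (Pc j) :=
  dehn_filling_finite_index_general n P Pc hfi hres hker
end

section
/- Let G be the fundamental group of a finite graph of groups in which every edge group is trivial and every vertex group is finite (equivalently, G is a free product of finitely many finite groups and a finitely generated free group). Then for any choice, for each vertex v, of a normal subgroup G'_v ⊴ G_v (here finite vertex groups, so G'_v of finite index), there exists a normal finite-index subgroup Q ⊴ G such that Q ∩ G_v = G'_v for every vertex group G_v ≤ G. In particular, taking G'_v = {1}, G has a finite-index normal subgroup intersecting each conjugate of each vertex group trivially, i.e. a finite-index free subgroup. -/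
open Monoid

/-- The inclusion of the `i`-th vertex group `H i` into the free product
`(H₁ ∗ ⋯ ∗ H_k) ∗ F_r` of the finite groups `H i` and the free group of rank `r`
(i.e. into the fundamental group of a finite graph of finite groups with trivial
edge groups). -/
def vertexInclusion {k r : ℕ} (H : Fin k → Type) [∀ i, Group (H i)] (i : Fin k) :
    H i →* Coprod (CoprodI H) (FreeGroup (Fin r)) :=
  Coprod.inl.comp CoprodI.of

/-! The kernel of `G → ∏ i, H i ⧸ N i` gives the first part. For the second, take `N i = 1`:
the resulting normal subgroup `Q` meets every conjugate of every vertex group trivially, so the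
vertex groups act freely on `G ⧸ Q`. The action groupoid of `G` on `G ⧸ Q` is then free, generated
by the arrows of the free generators together with, in each orbit of a vertex group, the arrows
from a chosen representative to the other points of the orbit (a functor to a group is forced on
the vertex group by a coboundary). `Q` is the vertex group of this connected free groupoid, hence
free by the spanning-tree argument behind Mathlib's Nielsen–Schreier theorem. -/

section OrbitTransversal

variable {H G A : Type*} [Group H] [Group G] [MulAction G A] (φ : H →* G)

def orbitRelVia : Setoid A where
  r a b := ∃ h, φ h • a = b
  iseqv :=
    { refl := fun a => ⟨1, by rw [map_one, one_smul]⟩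
      symm := fun ⟨h, hab⟩ => ⟨h⁻¹, by rw [← hab, map_inv, inv_smul_smul]⟩
      trans := fun ⟨h, hab⟩ ⟨h', hbc⟩ => ⟨h' * h, by rw [← hbc, ← hab, map_mul, mul_smul]⟩ }

noncomputable def orbitRep (a : A) : A :=
  (Quotient.mk (orbitRelVia φ) a).out

lemma exists_smul_orbitRep (a : A) : ∃ h, φ h • orbitRep φ a = a :=
  Quotient.mk_out (s := orbitRelVia φ) a

noncomputable def orbitCoord (a : A) : H :=
  (exists_smul_orbitRep φ a).choose

lemma smul_orbitRep (a : A) : φ (orbitCoord φ a) • orbitRep φ a = a :=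
  (exists_smul_orbitRep φ a).choose_spec

lemma orbitRep_smul (h : H) (a : A) : orbitRep φ (φ h • a) = orbitRep φ a :=
  congrArg Quotient.out <| Quotient.sound (s := orbitRelVia φ)
    (⟨h⁻¹, by rw [map_inv, inv_smul_smul]⟩ : ∃ h', φ h' • φ h • a = a)

lemma orbitRep_orbitRep (a : A) : orbitRep φ (orbitRep φ a) = orbitRep φ a := by
  rw [← orbitRep_smul φ (orbitCoord φ a), smul_orbitRep]

variable {φ} (hfree : ∀ (h : H) (a : A), φ h • a = a → h = 1)
include hfree

lemma orbitCoord_eq_of_smul_orbitRep {h : H} {a : A} (hh : φ h • orbitRep φ a = a) :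
    orbitCoord φ a = h := by
  have : φ (h⁻¹ * orbitCoord φ a) • orbitRep φ a = orbitRep φ a := by
    rw [map_mul, mul_smul, smul_orbitRep, map_inv, inv_smul_eq_iff, hh]
  exact (inv_mul_eq_one.mp (hfree _ _ this)).symm

lemma orbitCoord_smul (h : H) (a : A) : orbitCoord φ (φ h • a) = h * orbitCoord φ a :=
  orbitCoord_eq_of_smul_orbitRep hfree <| by rw [orbitRep_smul, map_mul, mul_smul, smul_orbitRep]

lemma orbitCoord_orbitRep (a : A) : orbitCoord φ (orbitRep φ a) = 1 :=
  orbitCoord_eq_of_smul_orbitRep hfree <| by rw [map_one, one_smul, orbitRep_orbitRep]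

end OrbitTransversal

section Cocycles

variable {G A X : Type*} [Group G] [MulAction G A] [Group X]

def coboundaryHom (t : A → X) : G →* (A → X) ⋊[mulAutArrow] G :=
  (MulAut.conj (SemidirectProduct.inl t)).toMonoidHom.comp SemidirectProduct.inr

@[simp]
lemma coboundaryHom_left (t : A → X) (g : G) (b : A) :
    (coboundaryHom t g).left b = t b * (t (g⁻¹ • b))⁻¹ := by
  simp only [coboundaryHom, MulEquiv.toMonoidHom_eq_coe, MonoidHom.coe_comp, MonoidHom.coe_coe,
    Function.comp_apply, MulAut.conj_apply, SemidirectProduct.mul_left, SemidirectProduct.left_inl,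
    SemidirectProduct.right_inl, map_one, SemidirectProduct.left_inr, MulAut.one_apply, mul_one,
    SemidirectProduct.mul_right, SemidirectProduct.right_inr, one_mul, SemidirectProduct.inv_left,
    inv_one, map_inv, Pi.mul_apply, Pi.inv_apply, mulAutArrow_apply_apply, mul_right_inj, inv_inj]
  rfl

@[simp]
lemma coboundaryHom_right (t : A → X) (g : G) : (coboundaryHom t g).right = g := by
  simp [coboundaryHom]

lemma left_map_mul_apply {F : G →* (A → X) ⋊[mulAutArrow] G} (hF : ∀ g, (F g).right = g)
    (g₁ g₂ : G) (b : A) : (F (g₁ * g₂)).left b = (F g₁).left b * (F g₂).left (g₁⁻¹ • b) := by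
  rw [map_mul, SemidirectProduct.mul_left, hF]
  rfl

variable {H : Type*} [Group H] {φ : H →* G} (hfree : ∀ (h : H) (a : A), φ h • a = a → h = 1)
include hfree

/-- A cocycle is a coboundary along each free `H`-orbit, with potential given by its values on
the arrows from the orbit representative. -/
lemma left_map_eq_of_orbitCoord {F : G →* (A → X) ⋊[mulAutArrow] G} (hF : ∀ g, (F g).right = g)
    (h : H) (b : A) :
    (F (φ h)).left b = (F (φ (orbitCoord φ b))).left b *
      ((F (φ (orbitCoord φ ((φ h)⁻¹ • b)))).left ((φ h)⁻¹ • b))⁻¹ := by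
  rw [eq_mul_inv_iff_mul_eq, ← left_map_mul_apply hF, ← map_mul, ← map_inv,
    orbitCoord_smul hfree, mul_inv_cancel_left]

lemma comp_eq_of_left_orbitCoord_eq {F F' : G →* (A → X) ⋊[mulAutArrow] G}
    (hF : ∀ g, (F g).right = g) (hF' : ∀ g, (F' g).right = g)
    (h : ∀ b, (F (φ (orbitCoord φ b))).left b = (F' (φ (orbitCoord φ b))).left b) :
    F.comp φ = F'.comp φ := by
  ext x : 1
  refine SemidirectProduct.ext ?_ (by simp [hF, hF'])
  funext b
  simp only [MonoidHom.comp_apply]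
  rw [left_map_eq_of_orbitCoord hfree hF, left_map_eq_of_orbitCoord hfree hF', h, h]

end Cocycles

open CategoryTheory ActionCategory

namespace CategoryTheory.ActionCategory

variable {G A X : Type*} [Group G] [MulAction G A] [Group X]

lemma map_eq_curry_left (E : ActionCategory G A ⥤ SingleObj X) {a b : ActionCategory G A}
    (f : a ⟶ b) : E.map f = (curry E f.val).left b.back :=
  ActionCategory.cases (P := fun _ b f => E.map f = (curry E f.val).left b.back)
    (fun _ _ => rfl) f

lemma curry_injective :
    Function.Injective (curry : (ActionCategory G A ⥤ SingleObj X) → _) := by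
  intro E₁ E₂ h
  refine Functor.hext (fun _ => rfl) (ActionCategory.cases fun t g => heq_of_eq ?_)
  exact congrArg (fun F => (F g).left t) h

end CategoryTheory.ActionCategory

namespace FreeProductAction

variable {k r : ℕ} {H : Fin k → Type} [∀ i, Group (H i)] {A : Type}
  [MulAction (Coprod (CoprodI H) (FreeGroup (Fin r))) A]

abbrev Generator (a b : ActionCategory (Coprod (CoprodI H) (FreeGroup (Fin r))) A) : Type :=
  (Σ i, {h : H i // h ≠ 1 ∧ orbitRep (vertexInclusion (r := r) H i) a.back = a.back ∧
      vertexInclusion (r := r) H i h • a.back = b.back}) ⊕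
    {e : Fin r // (Coprod.inr (FreeGroup.of e) : Coprod (CoprodI H) _) • a.back = b.back}

def Generator.toHom {a b : ActionCategory (Coprod (CoprodI H) (FreeGroup (Fin r))) A} :
    Generator a b → (a ⟶ b)
  | Sum.inl ⟨i, h, hh⟩ => ⟨vertexInclusion H i h, hh.2.2⟩
  | Sum.inr ⟨e, he⟩ => ⟨Coprod.inr (FreeGroup.of e), he⟩

variable (hfree : ∀ i (h : H i) (a : A), vertexInclusion (r := r) H i h • a = a → h = 1)
variable {X : Type} [Group X]

include hfree in
lemma curry_eq_of_map_toHom_eq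
    {E₁ E₂ : ActionCategory (Coprod (CoprodI H) (FreeGroup (Fin r))) A ⥤ SingleObj X}
    (hE : ∀ a b (g : Generator a b), E₁.map g.toHom = E₂.map g.toHom) : curry E₁ = curry E₂ := by
  refine Coprod.hom_ext (CoprodI.ext_hom _ _ fun i => ?_) (FreeGroup.ext_hom _ _ fun e => ?_)
  · refine comp_eq_of_left_orbitCoord_eq (hfree i) (curry_apply_right E₁)
      (curry_apply_right E₂) fun b => ?_
    by_cases hb : orbitCoord (vertexInclusion (r := r) H i) b = 1
    · simp only [hb, map_one, SemidirectProduct.one_left]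
    · have := hE (orbitRep (vertexInclusion H i) b : A) b
        (Sum.inl ⟨i, orbitCoord (vertexInclusion H i) b, hb, orbitRep_orbitRep _ b,
          smul_orbitRep (vertexInclusion H i) b⟩)
      exact (map_eq_curry_left _ _).symm.trans (this.trans (map_eq_curry_left _ _))
  · refine SemidirectProduct.ext (funext fun b => ?_) rfl
    have := hE
      (((Coprod.inr (FreeGroup.of e) : Coprod (CoprodI H) (FreeGroup (Fin r)))⁻¹ • b : A)) b
      (Sum.inr ⟨e, smul_inv_smul _ b⟩)
    exact (map_eq_curry_left _ _).symm.trans (this.trans (map_eq_curry_left _ _))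

variable (f : ∀ a b : ActionCategory (Coprod (CoprodI H) (FreeGroup (Fin r))) A, Generator a b → X)

-- The value forced on the arrow from the representative of the `H i`-orbit of `b` to `b`.
open scoped Classical in
noncomputable def vertexPotential (i : Fin k) (b : A) : X :=
  if hb : orbitCoord (vertexInclusion (r := r) H i) b = 1 then 1
  else f (orbitRep (vertexInclusion H i) b : A) b
    (Sum.inl ⟨i, orbitCoord (vertexInclusion H i) b, hb, orbitRep_orbitRep _ b,
      smul_orbitRep (vertexInclusion H i) b⟩)

noncomputable def freeGeneratorImage (e : Fin r) :
    (A → X) ⋊[mulAutArrow] Coprod (CoprodI H) (FreeGroup (Fin r)) :=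
  ⟨fun b => f ((Coprod.inr (FreeGroup.of e))⁻¹ • b : A) b (Sum.inr ⟨e, smul_inv_smul _ b⟩),
    Coprod.inr (FreeGroup.of e)⟩

noncomputable def lift : Coprod (CoprodI H) (FreeGroup (Fin r)) →*
    (A → X) ⋊[mulAutArrow] Coprod (CoprodI H) (FreeGroup (Fin r)) :=
  Coprod.lift
    (CoprodI.lift fun i => (coboundaryHom (vertexPotential f i)).comp (vertexInclusion H i))
    (FreeGroup.lift (freeGeneratorImage f))

lemma lift_right (g : Coprod (CoprodI H) (FreeGroup (Fin r))) : (lift f g).right = g := by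
  suffices SemidirectProduct.rightHom.comp (lift f) = MonoidHom.id _ from
    DFunLike.congr_fun this g
  refine Coprod.hom_ext (CoprodI.ext_hom _ _ fun i => ?_) (FreeGroup.ext_hom _ _ fun e => ?_)
  · ext h
    simp [lift, vertexInclusion]
  · simp [lift, freeGeneratorImage]

include hfree in
lemma uncurry_lift_map_toHom {a b : ActionCategory (Coprod (CoprodI H) (FreeGroup (Fin r))) A}
    (g : Generator a b) : (uncurry (lift f) (lift_right f)).map g.toHom = f a b g := by
  rcases a with ⟨⟨⟩, a : A⟩
  rcases b with ⟨⟨⟩, b : A⟩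
  rcases g with ⟨i, h, hne, hrep, hab : vertexInclusion H i h • a = b⟩ | ⟨e, hab⟩
  · obtain rfl : a = orbitRep (vertexInclusion H i) b := by
      rw [← hab, orbitRep_smul]
      exact hrep.symm
    obtain rfl : h = orbitCoord (vertexInclusion H i) b :=
      (orbitCoord_eq_of_smul_orbitRep (hfree i) hab).symm
    show (coboundaryHom (vertexPotential f i) (vertexInclusion H i _)).left b = _
    rw [coboundaryHom_left, inv_smul_eq_iff.mpr hab.symm, vertexPotential, dif_neg hne,
      vertexPotential, dif_pos (orbitCoord_orbitRep (hfree i) b), inv_one, mul_one]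
  · obtain rfl := inv_smul_eq_iff.mpr hab.symm
    show (lift f (Coprod.inr (FreeGroup.of e))).left b = _
    simp [lift, freeGeneratorImage]

include hfree in
lemma existsUnique_lift :
    ∃! F : ActionCategory (Coprod (CoprodI H) (FreeGroup (Fin r))) A ⥤ SingleObj X,
      ∀ a b (g : Generator a b), F.map g.toHom = f a b g :=
  ⟨uncurry (lift f) (lift_right f), fun _ _ => uncurry_lift_map_toHom hfree f, fun _ hE =>
    curry_injective <| curry_eq_of_map_toHom_eq hfree fun a b g =>
      (hE a b g).trans (uncurry_lift_map_toHom hfree f g).symm⟩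

include hfree in
@[reducible]
noncomputable def isFreeGroupoid_actionCategory :
    IsFreeGroupoid (ActionCategory (Coprod (CoprodI H) (FreeGroup (Fin r))) A) where
  quiverGenerators := ⟨Generator⟩
  of := Generator.toHom
  unique_lift f := existsUnique_lift hfree fun _ _ g => f g

end FreeProductAction

theorem isFreeGroup_of_isFreeGroupoid {G : Type*} [Group G] (Q : Subgroup G)
    [IsFreeGroupoid (ActionCategory G (G ⧸ Q))] : IsFreeGroup Q :=
  -- `endMulEquivSubgroup` lives on the monoid-action category structure, whereas the
  -- Nielsen–Schreier instances see `End` through the groupoid structure.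
  have : @CategoryTheory.IsConnected (ActionCategory G (G ⧸ Q)) Groupoid.toCategory :=
    (inferInstance : CategoryTheory.IsConnected (ActionCategory G (G ⧸ Q)))
  IsFreeGroup.ofMulEquiv
    (G := @End _ Groupoid.toCategory.toCategoryStruct (objEquiv G (G ⧸ Q) ↑(1 : G)))
    (MulEquiv.mk' (endMulEquivSubgroup Q).toEquiv (endMulEquivSubgroup Q).map_mul)

section FreeVertexAction

variable {k r : ℕ} {H : Fin k → Type} [∀ i, Group (H i)]
  {Q : Subgroup (Coprod (CoprodI H) (FreeGroup (Fin r)))}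
  (hQ : ∀ i g, Q ⊓ conjSub g (Subgroup.map (vertexInclusion (r := r) H i) ⊤) = ⊥)
include hQ

lemma eq_one_of_vertexInclusion_smul_eq_self {i : Fin k} {h : H i}
    {a : Coprod (CoprodI H) (FreeGroup (Fin r)) ⧸ Q} (ha : vertexInclusion (r := r) H i h • a = a) :
    h = 1 := by
  induction a using QuotientGroup.induction_on with | H g => ?_
  rw [MulAction.Quotient.smul_mk, QuotientGroup.eq] at ha
  have hQmem : MulAut.conj g⁻¹ (vertexInclusion H i h⁻¹) ∈ Q := by
    simpa [MulAut.conj_apply, mul_assoc] using ha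
  have hconj : MulAut.conj g⁻¹ (vertexInclusion H i h⁻¹) ∈
      conjSub g⁻¹ (Subgroup.map (vertexInclusion (r := r) H i) ⊤) :=
    Subgroup.mem_map_of_mem _ (Subgroup.mem_map_of_mem _ trivial)
  have hone := Subgroup.mem_bot.mp (hQ i g⁻¹ ▸ Subgroup.mem_inf.mpr ⟨hQmem, hconj⟩)
  rw [MulEquiv.map_eq_one_iff] at hone
  have hinj : Function.Injective (vertexInclusion (r := r) H i) :=
    Coprod.inl_injective.comp (CoprodI.of_injective i)
  exact inv_eq_one.mp ((map_eq_one_iff _ hinj).mp hone)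

theorem isFreeGroup_of_inf_conjSub_eq_bot : IsFreeGroup Q :=
  have := FreeProductAction.isFreeGroupoid_actionCategory fun _ _ _ =>
    eq_one_of_vertexInclusion_smul_eq_self hQ
  isFreeGroup_of_isFreeGroupoid Q

end FreeVertexAction

lemma Subgroup.inf_map_top_eq_map_comap {G G' : Type*} [Group G] [Group G'] (Q : Subgroup G')
    (f : G →* G') : Q ⊓ Subgroup.map f ⊤ = (Q.comap f).map f := by
  rw [Subgroup.map_comap_eq, MonoidHom.range_eq_map, inf_comm]

lemma Subgroup.Normal.inf_conjSub_eq_bot {G : Type*} [Group G] {Q P : Subgroup G} (hQ : Q.Normal)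
    (h : Q ⊓ P = ⊥) (g : G) : Q ⊓ conjSub g P = ⊥ := by
  refine eq_bot_iff.mpr fun x ⟨hxQ, p, hp, hpx⟩ => ?_
  subst hpx
  have hpQ : p ∈ Q := by simpa [MulAut.conj_apply, mul_assoc] using hQ.conj_mem _ hxQ g⁻¹
  have hp1 : p = 1 := Subgroup.mem_bot.mp (h ▸ Subgroup.mem_inf.mpr ⟨hpQ, hp⟩)
  simp [hp1]

theorem exists_normal_finiteIndex_comap_vertexInclusion_eq {k : ℕ} (r : ℕ) {H : Fin k → Type}
    [∀ i, Group (H i)] [∀ i, Finite (H i)] (N : ∀ i, Subgroup (H i)) [∀ i, (N i).Normal] :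
    ∃ Q : Subgroup (Coprod (CoprodI H) (FreeGroup (Fin r))),
      Q.Normal ∧ Q.FiniteIndex ∧ ∀ i, Q.comap (vertexInclusion H i) = N i := by
  let φ : Coprod (CoprodI H) (FreeGroup (Fin r)) →* ∀ i, H i ⧸ N i :=
    Coprod.lift (CoprodI.lift fun i => (MonoidHom.mulSingle _ i).comp (QuotientGroup.mk' (N i))) 1
  refine ⟨φ.ker, φ.normal_ker, inferInstance, fun i => ?_⟩
  have hφ : φ.comp (vertexInclusion H i) =
      (MonoidHom.mulSingle _ i).comp (QuotientGroup.mk' (N i)) := by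
    ext h
    simp [φ, vertexInclusion]
  rw [MonoidHom.comap_ker, hφ, MonoidHom.ker_comp_of_injective _ _
    (Pi.mulSingle_injective (M := fun i => H i ⧸ N i) i), QuotientGroup.ker_mk']

/-- Let `G = (H₁ ∗ ⋯ ∗ H_k) ∗ F_r` be a free product of finitely many finite groups
and a finitely generated free group (equivalently, the fundamental group of a finite
graph of groups with trivial edge groups and finite vertex groups).  For any choice of
normal subgroups `N i ⊴ H i`, there is a normal finite-index subgroup `Q ⊴ G` with
`Q ∩ G_v = G'_v` for every vertex group; in particular (taking `N i = 1`) `G` has a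
normal finite-index subgroup meeting every conjugate of every vertex group trivially,
which is a free group. -/
theorem finite_index_subgroup_prescribed_vertex_groups
    (k r : ℕ) (H : Fin k → Type) [∀ i, Group (H i)] [∀ i, Finite (H i)]
    (N : ∀ i, Subgroup (H i)) (hN : ∀ i, (N i).Normal) :
    (∃ Q : Subgroup (Coprod (CoprodI H) (FreeGroup (Fin r))),
      Q.Normal ∧ Q.FiniteIndex ∧
      ∀ i : Fin k,
        Q ⊓ Subgroup.map (vertexInclusion (r := r) H i) ⊤ =
          Subgroup.map (vertexInclusion (r := r) H i) (N i)) ∧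
    (∃ Q : Subgroup (Coprod (CoprodI H) (FreeGroup (Fin r))),
      Q.Normal ∧ Q.FiniteIndex ∧
      (∀ (i : Fin k) (g : Coprod (CoprodI H) (FreeGroup (Fin r))),
        Q ⊓ conjSub g (Subgroup.map (vertexInclusion (r := r) H i) ⊤) = ⊥) ∧
      ∃ S : Type, Nonempty (Q ≃* FreeGroup S)) := by
  obtain ⟨Q, hQ, hQfin, hQN⟩ := exists_normal_finiteIndex_comap_vertexInclusion_eq r N
  obtain ⟨Q₀, hQ₀, hQ₀fin, hQ₀bot⟩ :=
    exists_normal_finiteIndex_comap_vertexInclusion_eq r fun i => (⊥ : Subgroup (H i))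
  have hQ₀conj (i : Fin k) (g : Coprod (CoprodI H) (FreeGroup (Fin r))) :
      Q₀ ⊓ conjSub g (Subgroup.map (vertexInclusion (r := r) H i) ⊤) = ⊥ :=
    hQ₀.inf_conjSub_eq_bot (by rw [Subgroup.inf_map_top_eq_map_comap, hQ₀bot, Subgroup.map_bot]) g
  have := isFreeGroup_of_inf_conjSub_eq_bot hQ₀conj
  refine ⟨⟨Q, hQ, hQfin, fun i => ?_⟩, Q₀, hQ₀, hQ₀fin, hQ₀conj, _, ⟨IsFreeGroup.toFreeGroup Q₀⟩⟩
  rw [Subgroup.inf_map_top_eq_map_comap, hQN]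
end
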